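/- There exists a filtered probability space and a random time τ with P(τ ≤ t | F_t) increasing in t and with continuous martingale hazard process Λ, such that Λ ≠ Γ where Γ_t = −ln P(τ > t | F_t). Concretely: if τ is a totally inaccessible F-stopping time, then P(τ ≤ t | F_t) = 1_{τ≤t} is increasing, the martingale hazard process Λ (the continuous predictable compensator A of 1_{τ≤t}) is continuous, but Λ_t ≠ Γ_t in general. -/

import Mathlib

noncomputable section
open MeasureTheory Filter Set Function Topology

variable {Ω : Type*}

/-- The optional σ-algebra on `ℝ × Ω`, generated by the stochastic intervals `[T, ∞)`
for `ℱ`-stopping times `T`. -/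
def optionalSigma [m : MeasurableSpace Ω] (ℱ : Filtration ℝ m) : MeasurableSpace (ℝ × Ω) :=
  MeasurableSpace.generateFrom
    {C | ∃ T : Ω → ℝ, IsStoppingTime ℱ (fun ω => (T ω : WithTop ℝ)) ∧ C = {p : ℝ × Ω | T p.2 ≤ p.1}}

/-- The predictable σ-algebra on `ℝ × Ω`, generated by the sets `(s, t] × B` with `B ∈ ℱ s`. -/
def predictableSigma [m : MeasurableSpace Ω] (ℱ : Filtration ℝ m) : MeasurableSpace (ℝ × Ω) :=
  MeasurableSpace.generateFrom
    {C | ∃ (s t : ℝ) (B : Set Ω), s ≤ t ∧ MeasurableSet[ℱ s] B ∧ C = Set.Ioc s t ×ˢ B}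

/-- A process is optional if it is measurable for the optional σ-algebra. -/
def IsOptionalProc [m : MeasurableSpace Ω] (ℱ : Filtration ℝ m) (H : ℝ → Ω → ℝ) : Prop :=
  Measurable[optionalSigma ℱ] (Function.uncurry H)

/-- A process is predictable if it is measurable for the predictable σ-algebra. -/
def IsPredictableProc [m : MeasurableSpace Ω] (ℱ : Filtration ℝ m) (H : ℝ → Ω → ℝ) : Prop :=
  Measurable[predictableSigma ℱ] (Function.uncurry H)

/-- Condition (A): the random time `τ` avoids every `ℱ`-stopping time. -/
def AvoidsStoppingTimes [m : MeasurableSpace Ω] (ℱ : Filtration ℝ m) (μ : Measure Ω)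
    (τ : Ω → ℝ) : Prop :=
  ∀ T : Ω → ℝ, IsStoppingTime ℱ (fun ω => (T ω : WithTop ℝ)) → μ {ω | τ ω = T ω} = 0

/-- A real function is càdlàg : right-continuous with left limits. -/
def CadlagFun (f : ℝ → ℝ) : Prop :=
  (∀ t, ContinuousWithinAt f (Set.Ici t) t) ∧ ∀ t, ∃ l, Tendsto f (𝓝[<] t) (𝓝 l)

/-- `Z` is a càdlàg adapted version of the Azéma supermartingale `Z_t = P(τ > t | ℱ_t)`. -/
def IsAzemaSupermartingale [m : MeasurableSpace Ω] (ℱ : Filtration ℝ m) (μ : Measure Ω)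
    (τ : Ω → ℝ) (Z : ℝ → Ω → ℝ) : Prop :=
  Adapted ℱ Z ∧
  (∀ t, Z t =ᵐ[μ] μ[Set.indicator {ω | t < τ ω} (fun _ => (1 : ℝ)) | ℱ t]) ∧
  ∀ᵐ ω ∂μ, CadlagFun fun t => Z t ω

/-- A pseudo-stopping time: `E[M_τ] = E[M_0]` for every bounded `ℱ`-martingale `M`. -/
def IsPseudoStoppingTime [m : MeasurableSpace Ω] (ℱ : Filtration ℝ m) (μ : Measure Ω)
    (τ : Ω → ℝ) : Prop :=
  ∀ M : ℝ → Ω → ℝ, Martingale M ℱ μ → (∃ C, ∀ t ω, |M t ω| ≤ C) →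
    ∫ ω, M (τ ω) ω ∂μ = ∫ ω, M 0 ω ∂μ

/-- The Lebesgue–Stieltjes measure associated with the increasing right-continuous path
`t ↦ A t ω`. -/
def pathMeasure (A : ℝ → Ω → ℝ) (ω : Ω) (hm : Monotone fun t => A t ω)
    (hrc : ∀ x, ContinuousWithinAt (fun t => A t ω) (Set.Ici x) x) : Measure ℝ :=
  StieltjesFunction.measure ⟨fun t => A t ω, hm, hrc⟩

/-- `ν ω` is the family of measures of a dual projection of `1_{τ ≤ t}` relative to the class
`P` of processes: `E[H_τ] = E[∫ H_s dν]` for every bounded `H` in the class `P`. -/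
def DualProjectionProperty [m : MeasurableSpace Ω] (μ : Measure Ω) (τ : Ω → ℝ)
    (P : (ℝ → Ω → ℝ) → Prop) (ν : Ω → Measure ℝ) : Prop :=
  ∀ H : ℝ → Ω → ℝ, P H → (∃ C, ∀ t ω, |H t ω| ≤ C) →
    ∫ ω, H (τ ω) ω ∂μ = ∫ ω, ∫ s, H s ω ∂(ν ω) ∂μ

/-- `𝒢` is the progressive enlargement of `ℱ` with the random time `τ`:
`𝒢_t = ∩_{s > t} (ℱ_s ∨ σ(τ ∧ s))`. -/
def IsProgressiveEnlargement [m : MeasurableSpace Ω] (ℱ : Filtration ℝ m) (τ : Ω → ℝ)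
    (𝒢 : Filtration ℝ m) : Prop :=
  ∀ t, (𝒢 t : MeasurableSpace Ω) =
    ⨅ s ∈ Set.Ioi t,
      ((ℱ s : MeasurableSpace Ω) ⊔ MeasurableSpace.comap (fun ω => min (τ ω) s) inferInstance)

/-- An honest time: for every `t` it coincides on `{g ≤ t}` with an `ℱ t`-measurable
random variable. -/
def IsHonestTime [m : MeasurableSpace Ω] (ℱ : Filtration ℝ m) (g : Ω → ℝ) : Prop :=
  ∀ t, ∃ γ : Ω → ℝ, Measurable[ℱ t] γ ∧ ∀ ω, g ω ≤ t → g ω = γ ω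

/-- A local martingale: there is a localizing sequence of stopping times tending to `∞`
such that each stopped process is a martingale. -/
def IsLocalMartingale [m : MeasurableSpace Ω] (M : ℝ → Ω → ℝ) (ℱ : Filtration ℝ m)
    (μ : Measure Ω) : Prop :=
  ∃ T : ℕ → Ω → ℝ, (∀ n, IsStoppingTime ℱ (fun ω => (T n ω : WithTop ℝ))) ∧
    (∀ ω, Tendsto (fun n => T n ω) atTop atTop) ∧
    ∀ n, Martingale (fun t ω => M (min t (T n ω)) ω) ℱ μ

/-- Condition (C): every `ℱ`-martingale admits a continuous modification. -/
def ConditionC [m : MeasurableSpace Ω] (ℱ : Filtration ℝ m) (μ : Measure Ω) : Prop :=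
  ∀ M : ℝ → Ω → ℝ, Martingale M ℱ μ →
    ∃ M' : ℝ → Ω → ℝ, Martingale M' ℱ μ ∧ (∀ t, M t =ᵐ[μ] M' t) ∧
      ∀ᵐ ω ∂μ, Continuous fun t => M' t ω

/-- A martingale hazard process of `τ`: an `ℱ`-predictable right-continuous increasing
process `Λ`, vanishing on negative times, such that `1_{τ ≤ t} − Λ_{t ∧ τ}` is a
`𝒢`-martingale. -/
def IsMartingaleHazard [m : MeasurableSpace Ω] (ℱ 𝒢 : Filtration ℝ m) (μ : Measure Ω)
    (τ : Ω → ℝ) (Λ : ℝ → Ω → ℝ) : Prop :=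
  IsPredictableProc ℱ Λ ∧ (∀ ω, Monotone fun t => Λ t ω) ∧
  (∀ ω x, ContinuousWithinAt (fun t => Λ t ω) (Set.Ici x) x) ∧
  (∀ ω, ∀ t < (0 : ℝ), Λ t ω = 0) ∧
  Martingale (fun t ω => (if τ ω ≤ t then (1 : ℝ) else 0) - Λ (min t (τ ω)) ω) 𝒢 μ

/-- The running supremum over `[0, t]` of a process. -/
def runSup (N : ℝ → Ω → ℝ) (t : ℝ) (ω : Ω) : ℝ := sSup ((fun s => N s ω) '' Set.Icc 0 t)


namespace JRX
open ProbabilityTheory Real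
open scoped NNReal ENNReal

/-- exponential density as an `ℝ≥0`-valued function -/
def densNN : ℝ → ℝ≥0 := fun x => Real.toNNReal (if 0 ≤ x then Real.exp (-x) else 0)

lemma measurable_densNN : Measurable densNN := by
  apply Measurable.real_toNNReal
  exact Measurable.ite measurableSet_Ici (Real.measurable_exp.comp measurable_neg) measurable_const

/-- exponential probability measure (rate 1) on ℝ -/
def μex : Measure ℝ := volume.withDensity (fun x => densNN x)

lemma coe_densNN (x : ℝ) : (densNN x : ℝ≥0∞) = exponentialPDF 1 x := by
  rw [exponentialPDF_eq]
  simp only [densNN, ENNReal.ofReal, one_mul]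

instance : IsProbabilityMeasure μex := by
  constructor
  rw [μex, withDensity_apply _ MeasurableSet.univ, Measure.restrict_univ]
  simp_rw [coe_densNN]
  exact lintegral_exponentialPDF_eq_one one_pos

lemma μex_Iic_zero : μex (Iic 0) = 0 := by
  have h0 : μex {(0:ℝ)} = 0 :=
    (withDensity_absolutelyContinuous volume _) Real.volume_singleton
  have h1 : μex (Iio 0) = 0 := by
    rw [μex, withDensity_apply _ measurableSet_Iio]
    rw [setLIntegral_congr_fun (g := fun _ => (0:ℝ≥0∞)) measurableSet_Iio
      (fun x (hx : x ∈ Iio 0) => by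
        simp [densNN, if_neg (not_le.mpr (show x < 0 from hx))])]
    simp
  have : Iic (0:ℝ) = Iio 0 ∪ {0} := by ext x; simp [le_iff_lt_or_eq]
  rw [this]
  exact le_antisymm ((measure_union_le _ _).trans (by rw [h0, h1]; simp)) zero_le

lemma ae_pos : ∀ᵐ x ∂μex, (0:ℝ) < x := by
  rw [ae_iff]
  convert μex_Iic_zero using 2
  ext x; simp


/-- the σ-algebra at time `t`: Borel sets that are trivial after time `t` -/
def Fsig (t : ℝ) : MeasurableSpace ℝ where
  MeasurableSet' A := MeasurableSet A ∧ ((∀ x, t < x → x ∉ A) ∨ (∀ x, t < x → x ∈ A))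
  measurableSet_empty := ⟨MeasurableSet.empty, Or.inl fun x _ hx => hx⟩
  measurableSet_compl A := fun ⟨hA, h⟩ => ⟨hA.compl,
    h.elim (fun h => Or.inr fun x hx => h x hx) (fun h => Or.inl fun x hx hc => hc (h x hx))⟩
  measurableSet_iUnion f hf := by
    refine ⟨MeasurableSet.iUnion fun n => (hf n).1, ?_⟩
    by_cases hc : ∃ n, ∀ x, t < x → x ∈ f n
    · obtain ⟨n, hn⟩ := hc
      exact Or.inr fun x hx => Set.mem_iUnion.2 ⟨n, hn x hx⟩
    · push_neg at hc
      refine Or.inl fun x hx hmem => ?_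
      obtain ⟨n, hn⟩ := Set.mem_iUnion.1 hmem
      rcases (hf n).2 with h | h
      · exact h x hx hn
      · obtain ⟨y, hy, hyn⟩ := hc n
        exact hyn (h y hy)

lemma measurableSet_Fsig {t : ℝ} {A : Set ℝ} :
    MeasurableSet[Fsig t] A ↔
      MeasurableSet A ∧ ((∀ x, t < x → x ∉ A) ∨ (∀ x, t < x → x ∈ A)) := Iff.rfl

lemma Fsig_mono : Monotone Fsig := by
  intro s t hst A hA
  obtain ⟨hA, h⟩ := hA
  exact ⟨hA, h.imp (fun h x hx => h x (lt_of_le_of_lt hst hx))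
    (fun h x hx => h x (lt_of_le_of_lt hst hx))⟩

/-- the filtration -/
def ℱex : Filtration ℝ (inferInstance : MeasurableSpace ℝ) where
  seq := Fsig
  mono' := Fsig_mono
  le' t A hA := hA.1

lemma ℱex_apply (t : ℝ) : (ℱex t : MeasurableSpace ℝ) = Fsig t := rfl

/-- borel function constant after `t` is `Fsig t`-measurable -/
lemma measurable_Fsig_of {t : ℝ} {α : Type*} [MeasurableSpace α] {f : ℝ → α}
    (hf : Measurable f) (c : α) (hc : ∀ x, t < x → f x = c) : Measurable[Fsig t] f := by
  intro B hB
  refine ⟨hf hB, ?_⟩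
  by_cases h : c ∈ B
  · exact Or.inr fun x hx => by simp only [Set.mem_preimage, hc x hx]; exact h
  · exact Or.inl fun x hx hx' => h (hc x hx ▸ hx')

/-- the random time -/
def τex : ℝ → ℝ := fun x => max x 0

lemma τex_nonneg (x : ℝ) : 0 ≤ τex x := le_max_right _ _

lemma measurable_τex : Measurable τex := measurable_id.max measurable_const

lemma τex_stopping : IsStoppingTime ℱex (fun ω => (τex ω : WithTop ℝ)) := by
  intro t
  simp only [WithTop.coe_le_coe]
  refine ⟨(measurable_τex measurableSet_Iic : MeasurableSet {x | τex x ≤ t}), ?_⟩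
  refine Or.inl fun x hx hmem => ?_
  have : x ≤ t := le_trans (le_max_left x 0) hmem
  exact absurd hx (not_lt.mpr this)

/-- right-continuity of the filtration -/
lemma Fsig_rc {t : ℝ} {A : Set ℝ} (h : ∀ s, t < s → MeasurableSet[Fsig s] A) :
    MeasurableSet[Fsig t] A := by
  refine ⟨(h (t+1) (by linarith)).1, ?_⟩
  by_cases hc : ∃ s, t < s ∧ ∀ x, s < x → x ∈ A
  · obtain ⟨s₀, hs₀t, hs₀⟩ := hc
    refine Or.inr fun x hx => ?_
    rcases lt_or_ge s₀ x with h1 | h1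
    · exact hs₀ x h1
    · have hts : t < (t+x)/2 := by linarith
      have hsx : (t+x)/2 < x := by linarith
      rcases (h _ hts).2 with hd | hs
      · exact absurd (hs₀ (s₀+1) (by linarith)) (hd (s₀+1) (by linarith))
      · exact hs x hsx
  · push_neg at hc
    refine Or.inl fun x hx hxA => ?_
    have hts : t < (t+x)/2 := by linarith
    have hsx : (t+x)/2 < x := by linarith
    rcases (h _ hts).2 with hd | hs
    · exact hd x hsx hxA
    · obtain ⟨y, hy, hyA⟩ := hc _ hts
      exact hyA (hs y hy)

lemma comap_min_le (s : ℝ) :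
    MeasurableSpace.comap (fun ω : ℝ => min (τex ω) s) inferInstance ≤ Fsig s := by
  rintro A ⟨B, hB, rfl⟩
  have hmeas : Measurable fun ω : ℝ => min (τex ω) s := measurable_τex.min measurable_const
  refine ⟨hmeas hB, ?_⟩
  have key : ∀ x, s < x → min (τex x) s = s := fun x hx =>
    min_eq_right (le_max_of_le_left hx.le)
  by_cases h : s ∈ B
  · exact Or.inr fun x hx => by simp only [Set.mem_preimage, key x hx]; exact h
  · exact Or.inl fun x hx hx' => h (by rwa [Set.mem_preimage, key x hx] at hx')

lemma prog_enl (t : ℝ) :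
    (ℱex t : MeasurableSpace ℝ) =
      ⨅ s ∈ Set.Ioi t,
        ((ℱex s : MeasurableSpace ℝ) ⊔
          MeasurableSpace.comap (fun ω => min (τex ω) s) inferInstance) := by
  have hsup : ∀ s : ℝ, (ℱex s : MeasurableSpace ℝ) ⊔
      MeasurableSpace.comap (fun ω => min (τex ω) s) inferInstance = ℱex s :=
    fun s => sup_eq_left.mpr (comap_min_le s)
  apply le_antisymm
  · refine le_iInf fun s => le_iInf fun hs => ?_
    rw [hsup]
    exact Fsig_mono (le_of_lt hs)
  · intro A hA
    refine Fsig_rc fun s hs => ?_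
    have h1 : (⨅ s ∈ Set.Ioi t, ((ℱex s : MeasurableSpace ℝ) ⊔
        MeasurableSpace.comap (fun ω => min (τex ω) s) inferInstance)) ≤ ℱex s := by
      refine le_trans (iInf_le _ s) ?_
      refine le_trans (iInf_le _ hs) ?_
      rw [hsup]
    exact h1 A hA


/-- the Azéma supermartingale -/
def Zex : ℝ → ℝ → ℝ := fun t x => if t < τex x then 1 else 0

/-- the martingale hazard process -/
def Λex : ℝ → ℝ → ℝ := fun t _ => max t 0

lemma measurable_Zex (t : ℝ) : Measurable (Zex t) := by
  refine Measurable.ite ?_ measurable_const measurable_const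
  exact measurableSet_lt measurable_const measurable_τex

lemma Zex_adapted : Adapted ℱex Zex := by
  intro t
  refine (measurable_Fsig_of (measurable_Zex t) 1 fun x hx => ?_)
  have : t < τex x := lt_of_lt_of_le hx (le_max_left x 0)
  simp [Zex, this]

lemma integrable_of_bounded {g : ℝ → ℝ} (hg : Measurable g) (C : ℝ) (h : ∀ x, |g x| ≤ C) :
    Integrable g μex :=
  ⟨hg.aestronglyMeasurable, HasFiniteIntegral.of_bounded (C := C) (ae_of_all _ h)⟩

lemma Zex_condexp (t : ℝ) :
    Zex t =ᵐ[μex] μex[Set.indicator {ω | t < τex ω} (fun _ => (1 : ℝ)) | ℱex t] := by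
  have hind : Set.indicator {ω | t < τex ω} (fun _ => (1 : ℝ)) = Zex t := by
    funext x
    simp [Set.indicator_apply, Zex, Set.mem_setOf_eq]
  rw [hind, condExp_of_stronglyMeasurable (ℱex.le t) (Zex_adapted t).stronglyMeasurable
    (integrable_of_bounded (measurable_Zex t) 1 fun x => by
      simp only [Zex]; split <;> simp)]

lemma Zex_cadlag (ω : ℝ) : (∀ t, ContinuousWithinAt (fun t => Zex t ω) (Set.Ici t) t) ∧
    ∀ t, ∃ l, Tendsto (fun t => Zex t ω) (𝓝[<] t) (𝓝 l) := by
  constructor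
  · intro t
    rcases lt_or_ge t (τex ω) with h | h
    · have hev : (fun t => Zex t ω) =ᶠ[𝓝[≥] t] fun _ => (1:ℝ) := by
        filter_upwards [nhdsWithin_le_nhds (Iio_mem_nhds h)] with u (hu : u < τex ω)
        simp [Zex, hu]
      exact continuousWithinAt_const.congr_of_eventuallyEq hev (by simp [Zex, h])
    · refine (continuousWithinAt_const :
        ContinuousWithinAt (fun _ => (0:ℝ)) (Set.Ici t) t).congr ?_ (by simp [Zex, not_lt.mpr h])
      intro u hu
      simp [Zex, not_lt.mpr (le_trans h hu)]
  · intro t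
    rcases le_or_gt t (τex ω) with h | h
    · refine ⟨1, Tendsto.congr' ?_ tendsto_const_nhds⟩
      filter_upwards [self_mem_nhdsWithin] with u (hu : u < t)
      simp [Zex, lt_of_lt_of_le hu h]
    · refine ⟨0, Tendsto.congr' ?_ tendsto_const_nhds⟩
      filter_upwards [Ioo_mem_nhdsLT_of_mem (⟨h, le_rfl⟩ : t ∈ Set.Ioc (τex ω) t)] with u hu
      simp [Zex, not_lt.mpr hu.1.le]

lemma Zex_antitone (ω : ℝ) : Monotone fun t => 1 - Zex t ω := by
  intro s t hst
  simp only [sub_le_sub_iff_left]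
  simp only [Zex]
  split
  · split
    · exact le_rfl
    · next h1 h2 => exact absurd (lt_of_le_of_lt hst ‹t < τex ω›) h2
  · split <;> norm_num

/-- predictability of Λ -/
lemma Λex_predictable : Measurable[predictableSigma ℱex] (Function.uncurry Λex) := by
  have hfst : Measurable[predictableSigma ℱex] (fun p : ℝ × ℝ => p.1) := by
    apply measurable_of_Ioi
    intro a
    have : (fun p : ℝ × ℝ => p.1) ⁻¹' Ioi a = ⋃ n : ℕ, (Ioc a (a + (n+1)) ×ˢ (univ : Set ℝ)) := by
      ext p
      simp only [Set.mem_preimage, Set.mem_Ioi, Set.mem_iUnion, Set.mem_prod, Set.mem_Ioc,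
        Set.mem_univ, and_true]
      constructor
      · intro h
        obtain ⟨n, hn⟩ := exists_nat_gt (p.1 - a)
        exact ⟨n, h, by push_cast; linarith⟩
      · rintro ⟨n, h, _⟩; exact h
    rw [this]
    exact MeasurableSet.iUnion fun n => MeasurableSpace.measurableSet_generateFrom
      ⟨a, a + (n+1), univ, by linarith [Nat.cast_nonneg (α:=ℝ) n], MeasurableSet.univ, rfl⟩
  exact hfst.max measurable_const


/-- the compensated process -/
def Xex : ℝ → ℝ → ℝ := fun t x => (if τex x ≤ t then (1:ℝ) else 0) - Λex (min t (τex x)) x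

lemma measurable_Xex (t : ℝ) : Measurable (Xex t) := by
  apply Measurable.sub
  · exact Measurable.ite (measurableSet_le measurable_τex measurable_const)
      measurable_const measurable_const
  · exact ((measurable_const.min measurable_τex).max measurable_const)

lemma Xex_bound (t x : ℝ) : |Xex t x| ≤ 1 + max t 0 := by
  have h1 : |if τex x ≤ t then (1:ℝ) else 0| ≤ 1 := by split <;> simp
  have h2 : |Λex (min t (τex x)) x| ≤ max t 0 := by
    rw [abs_of_nonneg (le_max_right _ _)]
    exact max_le_max (min_le_left _ _) le_rfl
  calc |Xex t x| ≤ |if τex x ≤ t then (1:ℝ) else 0| + |Λex (min t (τex x)) x| := abs_sub _ _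
    _ ≤ 1 + max t 0 := add_le_add h1 h2

lemma integrable_Xex (t : ℝ) : Integrable (Xex t) μex :=
  integrable_of_bounded (measurable_Xex t) (1 + max t 0) (Xex_bound t)

lemma Xex_adapted : Adapted ℱex Xex := by
  intro t
  refine (measurable_Fsig_of (measurable_Xex t) (-(max t 0)) fun x hx => ?_)
  have h1 : t < τex x := lt_of_lt_of_le hx (le_max_left x 0)
  simp only [Xex, Λex, if_neg (not_le.mpr h1), min_eq_left h1.le, zero_sub]

lemma Xex_of_neg {t : ℝ} (ht : t < 0) (x : ℝ) : Xex t x = 0 := by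
  have h1 : ¬ τex x ≤ t := not_le.mpr (lt_of_lt_of_le ht (τex_nonneg x))
  simp only [Xex, Λex, if_neg h1, min_eq_left (le_trans ht.le (τex_nonneg x)),
    max_eq_right ht.le, zero_sub, neg_zero]

lemma Xex_eq_low {s t x : ℝ} (hx : 0 ≤ x) (hxs : x ≤ s) (hst : s ≤ t) :
    Xex t x = Xex s x := by
  have hτ : τex x = x := max_eq_left hx
  simp only [Xex, Λex, hτ, if_pos (hxs.trans hst), if_pos hxs,
    min_eq_right (hxs.trans hst), min_eq_right hxs]

/-- transfer set integrals from `μex` to Lebesgue -/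
lemma setIntegral_μex (A : Set ℝ) (hA : MeasurableSet A) (g : ℝ → ℝ) :
    ∫ x in A, g x ∂μex = ∫ x in A, (densNN x : ℝ) * g x ∂volume := by
  rw [μex, setIntegral_withDensity_eq_setIntegral_smul measurable_densNN g hA]
  simp_rw [NNReal.smul_def, smul_eq_mul]

lemma densNN_coe_of_nonneg {x : ℝ} (hx : 0 ≤ x) : (densNN x : ℝ) = Real.exp (-x) := by
  simp [densNN, if_pos hx, Real.coe_toNNReal _ (Real.exp_nonneg _)]

lemma hasDeriv_aux (x : ℝ) : HasDerivAt (fun y => y * Real.exp (-y)) ((1 - x) * Real.exp (-x)) x := by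
  have h1 : HasDerivAt (fun y : ℝ => y) 1 x := hasDerivAt_id x
  have h2 : HasDerivAt (fun y : ℝ => Real.exp (-y)) (Real.exp (-x) * (-1)) x :=
    ((hasDerivAt_neg x).exp)
  have := h1.mul h2
  exact this.congr_deriv (by ring)

lemma integral_Ioc_part {s t : ℝ} (hst : s ≤ t) :
    ∫ x in Set.Ioc s t, (1 - x) * Real.exp (-x) ∂volume
      = t * Real.exp (-t) - s * Real.exp (-s) := by
  rw [← intervalIntegral.integral_of_le hst]
  exact intervalIntegral.integral_eq_sub_of_hasDerivAt (fun x _ => hasDeriv_aux x)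
    (Continuous.intervalIntegrable (by continuity) s t)

lemma integrableOn_exp_neg (a : ℝ) : IntegrableOn (fun x => Real.exp (-x)) (Set.Ioi a) volume := by
  have := exp_neg_integrableOn_Ioi a one_pos
  simpa using this

/-- the key integral computation -/
lemma key_integral {s t : ℝ} (hs : 0 ≤ s) (hst : s ≤ t) :
    ∫ x in Set.Ioi s, Xex t x ∂μex = -s * Real.exp (-s) := by
  rw [setIntegral_μex _ measurableSet_Ioi]
  have hcongr : ∀ x ∈ Set.Ioi s, (densNN x : ℝ) * Xex t x
      = Real.exp (-x) * ((if x ≤ t then (1:ℝ) else 0) - min t x) := by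
    intro x hx
    have hx0 : (0:ℝ) < x := lt_of_le_of_lt hs hx
    have hτ : τex x = x := max_eq_left hx0.le
    have hmin : (0:ℝ) ≤ min t x := le_min (hs.trans hst) hx0.le
    rw [densNN_coe_of_nonneg hx0.le]
    simp only [Xex, Λex, hτ, max_eq_left hmin]
  rw [setIntegral_congr_fun measurableSet_Ioi hcongr]
  have hdisj : Disjoint (Set.Ioc s t) (Set.Ioi t) := Ioc_disjoint_Ioi le_rfl
  have hint1 : IntegrableOn (fun x => Real.exp (-x) * ((if x ≤ t then (1:ℝ) else 0) - min t x))
      (Set.Ioc s t) volume := by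
    refine IntegrableOn.congr_fun (Continuous.integrableOn_Ioc (by continuity)
      (f := fun x => (1 - x) * Real.exp (-x))) ?_ measurableSet_Ioc
    intro x hx
    simp only [if_pos hx.2, min_eq_right hx.2]
    ring
  have hint2 : IntegrableOn (fun x => Real.exp (-x) * ((if x ≤ t then (1:ℝ) else 0) - min t x))
      (Set.Ioi t) volume := by
    refine IntegrableOn.congr_fun ((integrableOn_exp_neg t).mul_const (-t)) ?_ measurableSet_Ioi
    intro x hx
    simp only [if_neg (not_le.mpr (mem_Ioi.mp hx)), min_eq_left (le_of_lt (mem_Ioi.mp hx))]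
    ring
  rw [← Ioc_union_Ioi_eq_Ioi hst, setIntegral_union hdisj measurableSet_Ioi hint1 hint2]
  have e1 : ∫ x in Set.Ioc s t, Real.exp (-x) * ((if x ≤ t then (1:ℝ) else 0) - min t x) ∂volume
      = t * Real.exp (-t) - s * Real.exp (-s) := by
    rw [setIntegral_congr_fun measurableSet_Ioc (g := fun x => (1 - x) * Real.exp (-x))
      (fun x hx => by simp only [if_pos hx.2, min_eq_right hx.2]; ring)]
    exact integral_Ioc_part hst
  have e2 : ∫ x in Set.Ioi t, Real.exp (-x) * ((if x ≤ t then (1:ℝ) else 0) - min t x) ∂volume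
      = -t * Real.exp (-t) := by
    rw [setIntegral_congr_fun measurableSet_Ioi (g := fun x => Real.exp (-x) * (-t))
      (fun x hx => by simp only [if_neg (not_le.mpr (mem_Ioi.mp hx)), min_eq_left (le_of_lt (mem_Ioi.mp hx))]; ring)]
    rw [integral_mul_const, integral_exp_neg_Ioi]
    ring
  rw [e1, e2]
  ring

lemma setint_zero_low {g : ℝ → ℝ} (hg : Integrable g μex) {s : ℝ} (hs : s ≤ 0) :
    ∫ x in Set.Ioi s, g x ∂μex = ∫ x in Set.Ioi 0, g x ∂μex := by
  rw [← Ioc_union_Ioi_eq_Ioi hs, setIntegral_union (Ioc_disjoint_Ioi le_rfl) measurableSet_Ioi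
    hg.integrableOn hg.integrableOn]
  have h0 : μex (Set.Ioc s 0) = 0 := measure_mono_null Ioc_subset_Iic_self μex_Iic_zero
  have hr : μex.restrict (Set.Ioc s 0) = 0 := Measure.restrict_eq_zero.mpr h0
  rw [hr, integral_zero_measure, zero_add]

lemma Xex_setIntegral_eq {s t : ℝ} (hst : s ≤ t) {A : Set ℝ}
    (hA : MeasurableSet[Fsig s] A) :
    ∫ x in A, Xex s x ∂μex = ∫ x in A, Xex t x ∂μex := by
  obtain ⟨hAm, hd⟩ := hA
  have hIoi : ∫ x in Set.Ioi s, Xex s x ∂μex = ∫ x in Set.Ioi s, Xex t x ∂μex := by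
    rcases le_or_gt 0 s with h0 | h0
    · rw [key_integral h0 le_rfl, key_integral h0 hst]
    · rw [setint_zero_low (integrable_Xex s) h0.le, setint_zero_low (integrable_Xex t) h0.le,
        setIntegral_congr_fun measurableSet_Ioi (g := fun _ => (0:ℝ))
          (fun x _ => Xex_of_neg h0 x), integral_zero]
      rcases lt_or_ge t 0 with ht | ht
      · rw [setIntegral_congr_fun measurableSet_Ioi (g := fun _ => (0:ℝ))
          (fun x _ => Xex_of_neg ht x), integral_zero]
      · rw [key_integral le_rfl ht]
        simp
  rcases hd with h | h
  · have hsub : A ⊆ Set.Iic s := fun x hx => not_lt.mp (fun hlt => h x hlt hx)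
    refine setIntegral_congr_ae hAm ?_
    filter_upwards [ae_pos] with x hx hxA
    exact (Xex_eq_low hx.le (hsub hxA) hst).symm
  · have hAeq : A = (A ∩ Set.Iic s) ∪ Set.Ioi s := by
      ext x
      constructor
      · intro hx
        rcases le_or_gt x s with h1 | h1
        · exact Or.inl ⟨hx, h1⟩
        · exact Or.inr h1
      · rintro (⟨hx, -⟩ | hx)
        exacts [hx, h x hx]
    have hdisj : Disjoint (A ∩ Set.Iic s) (Set.Ioi s) :=
      Set.disjoint_left.mpr fun x hx hx' => absurd hx.2 (not_le.mpr (mem_Ioi.mp hx'))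
    have hm1 : MeasurableSet (A ∩ Set.Iic s) := hAm.inter measurableSet_Iic
    rw [hAeq,
      setIntegral_union hdisj measurableSet_Ioi (integrable_Xex s).integrableOn
        (integrable_Xex s).integrableOn,
      setIntegral_union hdisj measurableSet_Ioi (integrable_Xex t).integrableOn
        (integrable_Xex t).integrableOn]
    have hpart1 : ∫ x in A ∩ Set.Iic s, Xex s x ∂μex = ∫ x in A ∩ Set.Iic s, Xex t x ∂μex := by
      refine setIntegral_congr_ae hm1 ?_
      filter_upwards [ae_pos] with x hx hxA
      exact (Xex_eq_low hx.le hxA.2 hst).symm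
    rw [hpart1, hIoi]

lemma Xex_martingale : Martingale Xex ℱex μex := by
  refine ⟨fun t => (Xex_adapted t).stronglyMeasurable, fun s t hst => ?_⟩
  refine (ae_eq_condExp_of_forall_setIntegral_eq (ℱex.le s) (integrable_Xex t)
    (fun A _ _ => (integrable_Xex s).integrableOn)
    (fun A hA _ => Xex_setIntegral_eq hst hA) ?_).symm
  exact ⟨Xex s, (Xex_adapted s).stronglyMeasurable, EventuallyEq.rfl⟩

end JRX

/-- counterexample to the Jeanblanc–Rutkowski conjecture: there is a random time
(a totally inaccessible stopping time) with `P(τ ≤ t | ℱ_t)` increasing and continuous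
martingale hazard process `Λ`, but `Λ ≠ Γ = −ln Z`. -/
theorem counterexample_hazard_neq_martingaleHazard :
    ∃ (Ω' : Type) (mΩ : MeasurableSpace Ω') (μ : Measure Ω')
      (_ : IsProbabilityMeasure μ) (ℱ 𝒢 : Filtration ℝ mΩ) (τ : Ω' → ℝ)
      (Z Λ : ℝ → Ω' → ℝ),
      (∀ ω, 0 ≤ τ ω) ∧ IsStoppingTime ℱ (fun ω => (τ ω : WithTop ℝ)) ∧
      IsAzemaSupermartingale ℱ μ τ Z ∧
      (∀ᵐ ω ∂μ, Monotone fun t => 1 - Z t ω) ∧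
      IsProgressiveEnlargement ℱ τ 𝒢 ∧
      IsMartingaleHazard ℱ 𝒢 μ τ Λ ∧
      (∀ ω, Continuous fun t => Λ t ω) ∧
      ¬ ∀ t, Λ t =ᵐ[μ] fun ω => -Real.log (Z t ω) := by
  classical
  refine ⟨ℝ, inferInstance, JRX.μex, inferInstance, JRX.ℱex, JRX.ℱex, JRX.τex, JRX.Zex, JRX.Λex,
    JRX.τex_nonneg, JRX.τex_stopping,
    ⟨JRX.Zex_adapted, JRX.Zex_condexp, ae_of_all _ JRX.Zex_cadlag⟩,
    ae_of_all _ JRX.Zex_antitone, JRX.prog_enl,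
    ⟨JRX.Λex_predictable, fun _ _ _ h => max_le_max h le_rfl,
      fun _ x => ((continuous_id.max continuous_const).continuousAt).continuousWithinAt,
      fun _ t ht => max_eq_right ht.le, JRX.Xex_martingale⟩,
    fun _ => continuous_id.max continuous_const, ?_⟩
  intro hall
  have h1 := hall 1
  have h2 : (fun ω => -Real.log (JRX.Zex 1 ω)) = fun _ => (0:ℝ) := by
    funext ω
    by_cases h : (1:ℝ) < JRX.τex ω <;> simp [JRX.Zex, h]
  rw [h2] at h1
  haveI : (MeasureTheory.ae JRX.μex).NeBot :=
    ae_neBot.mpr (IsProbabilityMeasure.ne_zero JRX.μex)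
  obtain ⟨ω, hω⟩ := h1.exists
  simp [JRX.Λex] at hω
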